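/- Forward-push invariant: during any execution of forward push operations starting with residue r(s,s) = d(s), estimates π̂(s,·) = 0, and other residues 0, the identity π_d(s, t) = π̂_d(s, t) + Σ_{k ∈ V} (r(s,k)/d(k)) · π_d(k, t) is preserved by each push step, where a push at node k adds α·r(s,k) to π̂_d(s,k), adds (1−α)·r(s,k)/d(k) to r(s,j) for each out-neighbor j of k, and sets r(s,k) to 0. -/

import Mathlib

open Finset

/-- Forward-push invariant: the identity
`π_d(s,t) = π̂_d(s,t) + Σ_k (r(s,k)/d(k))·π_d(k,t)` holds in the initial
state (residue `d(s)` at `s`, all estimates zero) and is preserved by each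
push operation at any node `k`. -/
theorem forward_push_invariant {V : Type*} [Fintype V] [DecidableEq V]
    (N : V → Finset V) (d : V → ℕ)
    (hd : ∀ v, d v = (N v).card) (hd1 : ∀ v, 1 ≤ d v)
    (α : ℝ) (hα : 0 < α) (hα1 : α < 1)
    (πd : V → V → ℝ)
    (hrec : ∀ k t, πd k t =
      α * d k * (if k = t then 1 else 0) + (1 - α) * ∑ j ∈ N k, πd j t / d j)
    (s : V) :
    -- the initial state satisfies the invariant
    (∀ t, πd s t = 0 + ∑ k : V,
        ((if k = s then (d s : ℝ) else 0) / d k) * πd k t) ∧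
    -- each push step preserves the invariant
    (∀ (est r : V → ℝ),
      (∀ t, πd s t = est t + ∑ k : V, (r k / d k) * πd k t) →
      ∀ k : V, ∀ t, πd s t =
        (if t = k then est t + α * r k else est t)
        + ∑ k' : V,
            (((if k' = k then 0 else r k')
              + (if k' ∈ N k then (1 - α) * r k / d k else 0)) / d k')
              * πd k' t) := by
  have hdne : ∀ v, (d v : ℝ) ≠ 0 := fun v =>
    Nat.cast_ne_zero.mpr (Nat.one_le_iff_ne_zero.mp (hd1 v))
  constructor
  · intro t
    rw [zero_add, Finset.sum_eq_single s]
    · rw [if_pos rfl, div_self (hdne s), one_mul]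
    · intro b _ hb; simp [hb]
    · simp
  · intro est r hinv k t
    have key : (r k / d k) * πd k t = α * r k * (if t = k then 1 else 0)
        + ∑ j ∈ N k, (((1 - α) * r k / d k) / d j) * πd j t := by
      have hk := hrec k t
      calc (r k / d k) * πd k t
          = (r k / d k) * (α * d k * (if k = t then 1 else 0)
              + (1 - α) * ∑ j ∈ N k, πd j t / d j) := by rw [← hk]
        _ = α * r k * (if t = k then 1 else 0)
              + ∑ j ∈ N k, (((1 - α) * r k / d k) / d j) * πd j t := by
            rw [mul_add, Finset.mul_sum, Finset.mul_sum]
            congr 1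
            · rcases eq_or_ne k t with h | h
              · subst h
                simp only [if_true, mul_one]
                rw [div_mul_eq_mul_div, mul_div_assoc, mul_div_assoc,
                  div_self (hdne k), mul_one, mul_comm]
              · simp [h, Ne.symm h]
            · refine Finset.sum_congr rfl fun j _ => ?_
              field_simp
    have split : ∀ k' : V,
        (((if k' = k then 0 else r k')
          + (if k' ∈ N k then (1 - α) * r k / d k else 0)) / d k') * πd k' t
        = ((if k' = k then 0 else r k') / d k') * πd k' t
          + (if k' ∈ N k then (((1 - α) * r k / d k) / d k') * πd k' t else 0) := by
      intro k'
      rw [add_div, add_mul]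
      congr 1
      split <;> simp
    rw [hinv t]
    simp only [split, Finset.sum_add_distrib]
    rw [Finset.sum_ite_mem, Finset.univ_inter]
    have h2 : ∑ k' : V, ((if k' = k then 0 else r k') / d k') * πd k' t
        = (∑ k' : V, (r k' / d k') * πd k' t) - (r k / d k) * πd k t := by
      have e : ∀ k' : V, ((if k' = k then 0 else r k') / d k') * πd k' t
          = (r k' / d k') * πd k' t
            - (if k' = k then (r k' / d k') * πd k' t else 0) := by
        intro k'; split <;> simp
      simp only [e, Finset.sum_sub_distrib, Finset.sum_ite_eq' Finset.univ k,
        Finset.mem_univ, if_pos]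
    rw [h2, key]
    split <;> ring
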